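/- Let (Mₙ)_{n≥1} be i.i.d. random matrices as above. Then the product Sₙ = Mₙ⋯M₁ converges almost surely to a random matrix S all three of whose rows are identical. -/

import Mathlib

/-!
The rows of `Sₙ` are the vertices of a triangle, and each step replaces one vertex by a convex
combination of the three, so the triangles are nested and their diameters do not increase. When
two consecutive steps replace two different rows with all weights at least `ε`, the diameter
shrinks by the factor `1 - ε`. By the second Borel–Cantelli lemma this happens infinitely often
almost surely, so the diameters tend to `0` and the rows converge to one common limit.
-/

open MeasureTheory ProbabilityTheory Filter

instance : MeasurableSpace (Matrix (Fin 3) (Fin 3) ℝ) :=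
  inferInstanceAs (MeasurableSpace (Fin 3 → Fin 3 → ℝ))

/-- The identity matrix with its `i`-th row replaced by the vector `p`. -/
noncomputable def rowReplaceMatrix (p : Fin 3 → ℝ) (i : Fin 3) :
    Matrix (Fin 3) (Fin 3) ℝ :=
  fun r c => if r = i then p c else if r = c then 1 else 0

/-- The common law of the random matrices: pick a splitting ratio according to
`ν` and a uniform row index, and form the identity with that row replaced. -/
noncomputable def randomMatrixLaw (ν : Measure (Fin 3 → ℝ)) :
    Measure (Matrix (Fin 3) (Fin 3) ℝ) :=
  Measure.map (fun q : (Fin 3 → ℝ) × Fin 3 => rowReplaceMatrix q.1 q.2)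
    (ν.prod (PMF.uniformOfFintype (Fin 3)).toMeasure)

open Function Metric Set Topology

theorem tendsto_zero_of_antitone_of_frequently_le_mul {d : ℕ → ℝ} (hd : Antitone d)
    (hd0 : ∀ n, 0 ≤ d n) {c : ℝ} (hc : c < 1) {k : ℕ}
    (hdc : ∃ᶠ n in atTop, d (n + k) ≤ c * d n) : Tendsto d atTop (𝓝 0) := by
  set L := ⨅ n, d n
  have hL : Tendsto d atTop (𝓝 L) := tendsto_atTop_ciInf hd ⟨0, forall_mem_range.2 hd0⟩
  have hL0 : 0 ≤ L := ge_of_tendsto' hL hd0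
  have hLc : L ≤ c * L := by
    have hpair : Tendsto (fun n => (d (n + k), c * d n)) atTop (𝓝 (L, c * L)) :=
      (hL.comp (tendsto_add_atTop_nat k)).prodMk_nhds (hL.const_mul c)
    exact (isClosed_le continuous_fst continuous_snd).mem_of_frequently_of_tendsto hdc hpair
  have hL0' : L = 0 := by nlinarith
  rwa [hL0'] at hL

section ConvexUpdate

variable {ι E : Type*} [Fintype ι] [DecidableEq ι] [AddCommGroup E] [Module ℝ E]

def convexUpdate (v : ι → E) (i : ι) (p : ι → ℝ) : ι → E :=
  fun j => if j = i then ∑ c, p c • v c else v j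

@[simp]
theorem convexUpdate_self (v : ι → E) (i : ι) (p : ι → ℝ) :
    convexUpdate v i p i = ∑ c, p c • v c :=
  if_pos rfl

@[simp]
theorem convexUpdate_of_ne (v : ι → E) {i j : ι} (h : j ≠ i) (p : ι → ℝ) :
    convexUpdate v i p j = v j :=
  if_neg h

theorem range_convexUpdate_subset_convexHull (v : ι → E) (i : ι)
    {p : ι → ℝ} (hp : p ∈ stdSimplex ℝ ι) :
    range (convexUpdate v i p) ⊆ convexHull ℝ (range v) := by
  rintro _ ⟨j, rfl⟩
  rcases eq_or_ne j i with rfl | hj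
  · rw [convexUpdate_self]
    exact (convex_convexHull ℝ _).sum_mem (fun c _ => hp.1 c) hp.2
      fun c _ => subset_convexHull ℝ _ (mem_range_self c)
  · rw [convexUpdate_of_ne v hj]
    exact subset_convexHull ℝ _ (mem_range_self j)

end ConvexUpdate

section ConvexUpdateDiam

variable {ι E : Type*} [Fintype ι] [SeminormedAddCommGroup E] [NormedSpace ℝ E]

theorem dist_sum_smul_le (v : ι → E) {p : ι → ℝ} (hp : p ∈ stdSimplex ℝ ι) (k : ι) :
    dist (∑ c, p c • v c) (v k) ≤ (1 - p k) * diam (range v) := by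
  classical
  have hD : ∀ c, dist (v c) (v k) ≤ diam (range v) := fun c =>
    dist_le_diam_of_mem (finite_range v).isBounded (mem_range_self c) (mem_range_self k)
  calc dist (∑ c, p c • v c) (v k) = ‖∑ c, p c • (v c - v k)‖ := by
        simp only [dist_eq_norm, smul_sub, Finset.sum_sub_distrib, ← Finset.sum_smul, hp.2,
          one_smul]
    _ ≤ ∑ c, p c * dist (v c) (v k) := by
        refine (norm_sum_le _ _).trans_eq (Finset.sum_congr rfl fun c _ => ?_)
        rw [norm_smul, Real.norm_of_nonneg (hp.1 c), dist_eq_norm]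
    _ = ∑ c ∈ Finset.univ.erase k, p c * dist (v c) (v k) := by
        rw [← Finset.add_sum_erase _ _ (Finset.mem_univ k), dist_self, mul_zero, zero_add]
    _ ≤ ∑ c ∈ Finset.univ.erase k, p c * diam (range v) :=
        Finset.sum_le_sum fun c _ => mul_le_mul_of_nonneg_left (hD c) (hp.1 c)
    _ = (1 - p k) * diam (range v) := by
        rw [← Finset.sum_mul, ← hp.2, ← Finset.add_sum_erase _ _ (Finset.mem_univ k)]
        ring

theorem diam_range_convexUpdate_le [DecidableEq ι] (v : ι → E) (i : ι) {p : ι → ℝ}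
    (hp : p ∈ stdSimplex ℝ ι) : diam (range (convexUpdate v i p)) ≤ diam (range v) :=
  (diam_mono (range_convexUpdate_subset_convexHull v i hp)
    (isBounded_convexHull.2 (finite_range v).isBounded)).trans_eq (convexHull_diam _)

end ConvexUpdateDiam

-- The first step brings row `i` within `(1 - ε) * diam` of the other rows, the second does the
-- same for row `j`, and with three rows these two bounds cover every pair.
theorem diam_range_convexUpdate_convexUpdate_le {E : Type*} [SeminormedAddCommGroup E]
    [NormedSpace ℝ E] (v : Fin 3 → E) {i j : Fin 3} (hij : i ≠ j) {p r : Fin 3 → ℝ}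
    (hp : p ∈ stdSimplex ℝ (Fin 3)) (hr : r ∈ stdSimplex ℝ (Fin 3)) {ε : ℝ}
    (hpε : ∀ c, ε ≤ p c) (hrε : ∀ c, ε ≤ r c) :
    diam (range (convexUpdate (convexUpdate v i p) j r)) ≤ (1 - ε) * diam (range v) := by
  set w := convexUpdate v i p
  set u := convexUpdate w j r
  have hε : ε ≤ 1 := (hpε 0).trans (mem_Icc_of_mem_stdSimplex hp 0).2
  have hwi : ∀ k ≠ i, dist (w i) (w k) ≤ (1 - ε) * diam (range v) := fun k hk => by
    simp only [w, convexUpdate_self, convexUpdate_of_ne v hk]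
    exact (dist_sum_smul_le v hp k).trans
      (mul_le_mul_of_nonneg_right (by linarith [hpε k]) diam_nonneg)
  have huj : ∀ k ≠ j, dist (u j) (u k) ≤ (1 - ε) * diam (range v) := fun k hk => by
    simp only [u, convexUpdate_self, convexUpdate_of_ne w hk]
    exact (dist_sum_smul_le w hr k).trans (mul_le_mul (by linarith [hrε k])
      (diam_range_convexUpdate_le v i hp) diam_nonneg (by linarith))
  have hpair : ∀ a b, a ≠ b → (a = j ∨ a = i ∧ b ≠ j) →
      dist (u a) (u b) ≤ (1 - ε) * diam (range v) := by
    rintro a b hab (rfl | ⟨rfl, hb⟩)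
    · exact huj b hab.symm
    · simp only [u, convexUpdate_of_ne w hij, convexUpdate_of_ne w hb]
      exact hwi b hab.symm
  have hcases : ∀ i j a b : Fin 3, i ≠ j → a ≠ b →
      (a = j ∨ a = i ∧ b ≠ j) ∨ (b = j ∨ b = i ∧ a ≠ j) := by
    decide
  refine diam_le_of_forall_dist_le (mul_nonneg (by linarith) diam_nonneg) ?_
  rintro _ ⟨a, rfl⟩ _ ⟨b, rfl⟩
  rcases eq_or_ne a b with rfl | hab
  · rw [dist_self]
    exact mul_nonneg (by linarith) diam_nonneg
  rcases hcases i j a b hij hab with h | h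
  · exact hpair a b hab h
  · rw [dist_comm]
    exact hpair b a hab.symm h

section NestedHulls

variable {ι E : Type*} [NormedAddCommGroup E] [NormedSpace ℝ E] {v : ℕ → ι → E}

theorem range_subset_convexHull_of_le
    (hv : ∀ n, range (v (n + 1)) ⊆ convexHull ℝ (range (v n))) {m n : ℕ} (hmn : m ≤ n) :
    range (v n) ⊆ convexHull ℝ (range (v m)) := by
  induction n, hmn using Nat.le_induction with
  | base => exact subset_convexHull ℝ _
  | succ n _ ih => exact (hv n).trans (convexHull_min ih (convex_convexHull ℝ _))

theorem dist_le_diam_of_le [Finite ι]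
    (hv : ∀ n, range (v (n + 1)) ⊆ convexHull ℝ (range (v n)))
    {m n n' : ℕ} (hn : m ≤ n) (hn' : m ≤ n') (i j : ι) :
    dist (v n i) (v n' j) ≤ diam (range (v m)) := by
  rw [← convexHull_diam]
  exact dist_le_diam_of_mem (isBounded_convexHull.2 (finite_range _).isBounded)
    (range_subset_convexHull_of_le hv hn (mem_range_self i))
    (range_subset_convexHull_of_le hv hn' (mem_range_self j))

theorem antitone_diam_range [Finite ι]
    (hv : ∀ n, range (v (n + 1)) ⊆ convexHull ℝ (range (v n))) :
    Antitone fun n => diam (range (v n)) := by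
  refine antitone_nat_of_succ_le fun n => diam_le_of_forall_dist_le diam_nonneg ?_
  rintro _ ⟨i, rfl⟩ _ ⟨j, rfl⟩
  exact dist_le_diam_of_le hv n.le_succ n.le_succ i j

theorem exists_tendsto_forall_eq_of_tendsto_diam [Finite ι] [CompleteSpace E]
    (hv : ∀ n, range (v (n + 1)) ⊆ convexHull ℝ (range (v n)))
    (hdiam : Tendsto (fun n => diam (range (v n))) atTop (𝓝 0)) :
    ∃ L : ι → E, Tendsto v atTop (𝓝 L) ∧ ∀ i j, L i = L j := by
  have hcauchy : ∀ i, CauchySeq fun n => v n i := fun i =>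
    cauchySeq_of_le_tendsto_0 _ (fun n n' m hn hn' => dist_le_diam_of_le hv hn hn' i i) hdiam
  choose L hL using fun i => cauchySeq_tendsto_of_complete (hcauchy i)
  refine ⟨L, tendsto_pi_nhds.2 hL, fun i j => dist_le_zero.1 ?_⟩
  exact le_of_tendsto_of_tendsto' ((hL i).dist (hL j)) hdiam
    fun n => dist_le_diam_of_le hv le_rfl le_rfl i j

end NestedHulls

instance : BorelSpace (Matrix (Fin 3) (Fin 3) ℝ) :=
  inferInstanceAs (BorelSpace (Fin 3 → Fin 3 → ℝ))

theorem rowReplaceMatrix_mul (p : Fin 3 → ℝ) (i : Fin 3) (A : Matrix (Fin 3) (Fin 3) ℝ) :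
    rowReplaceMatrix p i * A = convexUpdate A i p := by
  ext r c
  change _ = (if r = i then ∑ c, p c • A c else A r) c
  split_ifs with hr <;> simp [rowReplaceMatrix, Matrix.mul_apply, hr]

@[simp]
theorem rowReplaceMatrix_apply_self (p : Fin 3 → ℝ) (i : Fin 3) :
    rowReplaceMatrix p i i = p := by
  ext c
  simp [rowReplaceMatrix]

theorem continuous_rowReplaceMatrix (i : Fin 3) : Continuous fun p => rowReplaceMatrix p i :=
  continuous_pi fun r => continuous_pi fun c => by
    unfold rowReplaceMatrix; split_ifs <;> fun_prop

theorem measurable_rowReplaceMatrix :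
    Measurable fun q : (Fin 3 → ℝ) × Fin 3 => rowReplaceMatrix q.1 q.2 :=
  measurable_from_prod_countable_left fun i => (continuous_rowReplaceMatrix i).measurable

/-- The image of `T` under `rowReplaceMatrix · i`, described through the `i`-th row so that it is
visibly closed. -/
def rowReplacements (T : Set (Fin 3 → ℝ)) (i : Fin 3) : Set (Matrix (Fin 3) (Fin 3) ℝ) :=
  {A | A i ∈ T ∧ rowReplaceMatrix (A i) i = A}

theorem rowReplaceMatrix_mem_rowReplacements {T : Set (Fin 3 → ℝ)} {p : Fin 3 → ℝ}
    (hp : p ∈ T) (i : Fin 3) : rowReplaceMatrix p i ∈ rowReplacements T i := by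
  simp [rowReplacements, hp]

theorem isClosed_rowReplacements {T : Set (Fin 3 → ℝ)} (hT : IsClosed T) (i : Fin 3) :
    IsClosed (rowReplacements T i) :=
  (hT.preimage (continuous_apply i)).inter
    (isClosed_eq ((continuous_rowReplaceMatrix i).comp (continuous_apply i)) continuous_id)

theorem mul_eq_convexUpdate_of_mem_rowReplacements {T : Set (Fin 3 → ℝ)} {i : Fin 3}
    {A : Matrix (Fin 3) (Fin 3) ℝ} (hA : A ∈ rowReplacements T i)
    (B : Matrix (Fin 3) (Fin 3) ℝ) :
    A * B = convexUpdate B i (A i) := by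
  rw [← rowReplaceMatrix_mul, hA.2]

theorem measure_prod_le_measure_preimage_rowReplacements {Ω : Type*} [MeasurableSpace Ω]
    {μ : Measure Ω} {X : Ω → Matrix (Fin 3) (Fin 3) ℝ} (hX : Measurable X)
    {ν : Measure (Fin 3 → ℝ)} (hXν : μ.map X = randomMatrixLaw ν) {T : Set (Fin 3 → ℝ)}
    (hT : IsClosed T) (s : Set (Fin 3)) :
    ν T * (PMF.uniformOfFintype (Fin 3)).toMeasure s ≤
      μ (X ⁻¹' ⋃ i ∈ s, rowReplacements T i) := by
  rw [← Measure.map_apply hX (MeasurableSet.biUnion s.to_countable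
    fun i _ => (isClosed_rowReplacements hT i).measurableSet), hXν, randomMatrixLaw,
    ← Measure.prod_prod]
  refine (measure_mono ?_).trans (Measure.le_map_apply measurable_rowReplaceMatrix.aemeasurable _)
  rintro ⟨p, i⟩ ⟨hp, hi⟩
  exact mem_iUnion₂.2 ⟨i, hi, rowReplaceMatrix_mem_rowReplacements hp i⟩

theorem ae_mem_iUnion_rowReplacements {Ω : Type*} [MeasurableSpace Ω]
    {μ : Measure Ω} [IsProbabilityMeasure μ] {X : Ω → Matrix (Fin 3) (Fin 3) ℝ}
    (hX : Measurable X) {ν : Measure (Fin 3 → ℝ)} [IsProbabilityMeasure ν]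
    (hXν : μ.map X = randomMatrixLaw ν)
    {T : Set (Fin 3 → ℝ)} (hT : IsClosed T) (hνT : ∀ᵐ p ∂ν, p ∈ T) :
    ∀ᵐ ω ∂μ, X ω ∈ ⋃ i, rowReplacements T i := by
  have hνT1 : ν T = 1 := by
    rw [← measure_univ (μ := ν)]
    exact (ae_iff_measure_eq hT.measurableSet.nullMeasurableSet).1 hνT
  have h := measure_prod_le_measure_preimage_rowReplacements hX hXν hT univ
  rw [measure_univ, mul_one, hνT1, biUnion_univ] at h
  have hmeas : MeasurableSet (⋃ i, rowReplacements T i) :=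
    MeasurableSet.iUnion fun i => (isClosed_rowReplacements hT i).measurableSet
  exact (ae_iff_measure_eq (hX hmeas).nullMeasurableSet).2
    ((le_antisymm prob_le_one h).trans measure_univ.symm)

theorem le_measure_preimage_rowReplacements {Ω : Type*} [MeasurableSpace Ω]
    {μ : Measure Ω} {X : Ω → Matrix (Fin 3) (Fin 3) ℝ} (hX : Measurable X)
    {ν : Measure (Fin 3 → ℝ)} (hXν : μ.map X = randomMatrixLaw ν) {T : Set (Fin 3 → ℝ)}
    (hT : IsClosed T) (i : Fin 3) :
    ν T * 3⁻¹ ≤ μ (X ⁻¹' rowReplacements T i) := by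
  simpa [PMF.toMeasure_apply_singleton, PMF.uniformOfFintype_apply] using
    measure_prod_le_measure_preimage_rowReplacements hX hXν hT {i}

def stdSimplexAbove (ι : Type*) [Fintype ι] (ε : ℝ) : Set (ι → ℝ) :=
  {p | ∀ i, ε ≤ p i} ∩ stdSimplex ℝ ι

theorem isClosed_stdSimplexAbove (ι : Type*) [Fintype ι] (ε : ℝ) :
    IsClosed (stdSimplexAbove ι ε) := by
  rw [stdSimplexAbove, ofPred_forall]
  exact (isClosed_iInter fun i => isClosed_le continuous_const (continuous_apply i)).inter
    (isClosed_stdSimplex ℝ ι)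

theorem exists_pos_measure_stdSimplexAbove_ne_zero {ι : Type*} [Fintype ι]
    {ν : Measure (ι → ℝ)} [NeZero ν] (hν : ∀ᵐ p ∂ν, ∀ i, 0 < p i)
    (hsimplex : ∀ᵐ p ∂ν, p ∈ stdSimplex ℝ ι) :
    ∃ ε > 0, ν (stdSimplexAbove ι ε) ≠ 0 := by
  have hcover : ∀ᵐ p ∂ν, p ∈ ⋃ k : ℕ, {p | ∀ i, 1 / ((k : ℝ) + 1) ≤ p i} := by
    filter_upwards [hν] with p hp
    obtain ⟨k, hk⟩ := (eventually_all.2 fun i =>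
      tendsto_one_div_add_atTop_nhds_zero_nat.eventually (gt_mem_nhds (hp i))).exists
    exact mem_iUnion.2 ⟨k, fun i => (hk i).le⟩
  obtain ⟨k, hk⟩ : ∃ k : ℕ, ν {p | ∀ i, 1 / ((k : ℝ) + 1) ≤ p i} ≠ 0 := by
    by_contra! h0
    have hfalse : ∀ᵐ p ∂ν, False := by
      filter_upwards [hcover, measure_eq_zero_iff_ae_notMem.1 (measure_iUnion_null h0)]
        with p h1 h2 using h2 h1
    exact NeZero.ne ν (ae_eq_bot.1 (eventually_false_iff_eq_bot.1 hfalse))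
  exact ⟨_, Nat.one_div_pos_of_nat, (measure_inter_conull hsimplex).trans_ne hk⟩

theorem ProbabilityTheory.iIndepFun.iIndepSet_preimage {Ω ι β : Type*} [MeasurableSpace Ω]
    [MeasurableSpace β] {μ : Measure Ω} {X : ι → Ω → β} (h : iIndepFun X μ)
    (hX : ∀ i, Measurable (X i)) {C : ι → Set β} (hC : ∀ i, MeasurableSet (C i)) :
    iIndepSet (fun i => X i ⁻¹' C i) μ := by
  have := h.isProbabilityMeasure
  rw [iIndepSet_iff_meas_biInter fun i => hX i (hC i)]
  exact fun s => h.meas_biInter fun i _ => ⟨C i, hC i, rfl⟩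

theorem ProbabilityTheory.iIndepSet.biInter_of_pairwise_disjoint {Ω ι κ : Type*}
    [MeasurableSpace Ω] {μ : Measure Ω} {f : ι → Set Ω} (h : iIndepSet f μ)
    (hf : ∀ i, MeasurableSet (f i)) {B : κ → Finset ι} (hB : Pairwise (Disjoint on B)) :
    iIndepSet (fun k => ⋂ i ∈ B k, f i) μ := by
  classical
  have := h.isProbabilityMeasure
  rw [iIndepSet_iff_meas_biInter fun k => Finset.measurableSet_biInter _ fun i _ => hf i]
  intro s
  rw [← Finset.set_biInter_biUnion, h.meas_biInter, Finset.prod_biUnion (hB.set_pairwise _)]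
  exact Finset.prod_congr rfl fun k _ => (h.meas_biInter (B k)).symm

theorem ae_frequently_mem_and_succ_mem {Ω β : Type*} [MeasurableSpace Ω] [MeasurableSpace β]
    {μ : Measure Ω} {X : ℕ → Ω → β} (hX : ∀ n, Measurable (X n)) (hind : iIndepFun X μ)
    {A B : Set β} (hA : MeasurableSet A) (hB : MeasurableSet B) {δ : ENNReal} (hδ : δ ≠ 0)
    (hAδ : ∀ n, δ ≤ μ (X n ⁻¹' A)) (hBδ : ∀ n, δ ≤ μ (X n ⁻¹' B)) :
    ∀ᵐ ω ∂μ, ∃ᶠ n in atTop, X n ω ∈ A ∧ X (n + 1) ω ∈ B := by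
  have := hind.isProbabilityMeasure
  set C : ℕ → Set β := fun n => if Even n then A else B
  have hC : ∀ n, MeasurableSet (C n) := fun n => by
    by_cases hn : Even n <;> simp [C, hn, hA, hB]
  have hCδ : ∀ n, δ ≤ μ (X n ⁻¹' C n) := fun n => by
    by_cases hn : Even n <;> simp [C, hn, hAδ, hBδ]
  set E : ℕ → Set Ω := fun k => ⋂ n ∈ ({2 * k, 2 * k + 1} : Finset ℕ), X n ⁻¹' C n
  have hpre := hind.iIndepSet_preimage hX hC
  have hE : iIndepSet E μ := hpre.biInter_of_pairwise_disjoint (fun n => hX n (hC n))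
    fun a b hab => Finset.disjoint_left.2 fun n ha hb => by simp at ha hb; omega
  have hEmeas : ∀ k, MeasurableSet (E k) := fun k =>
    Finset.measurableSet_biInter _ fun n _ => hX n (hC n)
  have hEδ : ∀ k, δ * δ ≤ μ (E k) := fun k => by
    rw [hpre.meas_biInter, Finset.prod_pair (by omega)]
    exact mul_le_mul' (hCδ _) (hCδ _)
  have hsum : ∑' k, μ (E k) = ⊤ := by
    refine top_le_iff.1 (le_of_eq_of_le ?_ (ENNReal.tsum_le_tsum hEδ))
    exact (ENNReal.tsum_const_eq_top_of_ne_zero (mul_ne_zero hδ hδ)).symm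
  have hlimsup : ∀ᵐ ω ∂μ, ω ∈ limsup E atTop :=
    (ae_iff_measure_eq (MeasurableSet.measurableSet_limsup hEmeas).nullMeasurableSet).2
      ((measure_limsup_eq_one hEmeas hE hsum).trans measure_univ.symm)
  filter_upwards [hlimsup] with ω hω
  refine (tendsto_id.const_mul_atTop' two_pos).frequently
    ((mem_limsup_iff_frequently_mem.1 hω).mono fun k hk => ?_)
  have h2k : 2 * k % 2 = 0 := by omega
  simpa [E, C, Nat.even_iff, h2k] using hk

theorem exists_tendsto_rows_eq_of_frequently_mem_rowReplacements
    {A N : ℕ → Matrix (Fin 3) (Fin 3) ℝ} (hA : ∀ n, A (n + 1) = N (n + 1) * A n)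
    (hN : ∀ n, N (n + 1) ∈ ⋃ i, rowReplacements (stdSimplex ℝ (Fin 3)) i)
    {ε : ℝ} (hε : 0 < ε)
    (hgood : ∃ᶠ n in atTop,
      N (n + 1) ∈ rowReplacements (stdSimplexAbove (Fin 3) ε) 1 ∧
      N (n + 2) ∈ rowReplacements (stdSimplexAbove (Fin 3) ε) 2) :
    ∃ L : Matrix (Fin 3) (Fin 3) ℝ, Tendsto A atTop (𝓝 L) ∧ ∀ i j, L i = L j := by
  have hnest : ∀ n, range (A (n + 1)) ⊆ convexHull ℝ (range (A n)) := fun n => by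
    obtain ⟨i, hi⟩ := mem_iUnion.1 (hN n)
    rw [hA n, mul_eq_convexUpdate_of_mem_rowReplacements hi]
    exact range_convexUpdate_subset_convexHull _ i hi.1
  have hcontract :
      ∃ᶠ n in atTop, diam (range (A (n + 2))) ≤ (1 - ε) * diam (range (A n)) := by
    refine hgood.mono fun n ⟨h1, h2⟩ => ?_
    have e1 := (hA n).trans (mul_eq_convexUpdate_of_mem_rowReplacements h1 (A n))
    have e2 := (hA (n + 1)).trans (mul_eq_convexUpdate_of_mem_rowReplacements h2 (A (n + 1)))
    rw [e2, e1]
    exact diam_range_convexUpdate_convexUpdate_le _ (by decide) h1.1.2 h2.1.2 h1.1.1 h2.1.1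
  exact exists_tendsto_forall_eq_of_tendsto_diam hnest
    (tendsto_zero_of_antitone_of_frequently_le_mul (antitone_diam_range hnest)
      (fun n => diam_nonneg) (by linarith) hcontract)

theorem matrix_product_converges_rows_equal_general
    {Ω : Type*} [MeasurableSpace Ω] (μ : Measure Ω) [IsProbabilityMeasure μ]
    (ν : Measure (Fin 3 → ℝ)) [IsProbabilityMeasure ν]
    (hνpos : ∀ᵐ p ∂ν, ∀ i, 0 < p i)
    (hνsum : ∀ᵐ p ∂ν, p 0 + p 1 + p 2 = 1)
    (M : ℕ → Ω → Matrix (Fin 3) (Fin 3) ℝ)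
    (hMmeas : ∀ n, Measurable (M n))
    (hMindep : iIndepFun M μ)
    (hMlaw : ∀ n, Measure.map (M n) μ = randomMatrixLaw ν)
    (S : ℕ → Ω → Matrix (Fin 3) (Fin 3) ℝ)
    (hSrec : ∀ n ω, S (n + 1) ω = M (n + 1) ω * S n ω) :
    ∃ Slim : Ω → Matrix (Fin 3) (Fin 3) ℝ,
      ∀ᵐ ω ∂μ, Tendsto (fun n => S n ω) atTop (nhds (Slim ω)) ∧
        Slim ω 0 = Slim ω 1 ∧ Slim ω 1 = Slim ω 2 := by
  have hsimplex : ∀ᵐ p ∂ν, p ∈ stdSimplex ℝ (Fin 3) := by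
    filter_upwards [hνpos, hνsum] with p hpos hsum
    exact ⟨fun i => (hpos i).le, by rwa [Fin.sum_univ_three]⟩
  obtain ⟨ε, hε, hνε⟩ := exists_pos_measure_stdSimplexAbove_ne_zero hνpos hsimplex
  set T := stdSimplexAbove (Fin 3) ε
  have hT : IsClosed T := isClosed_stdSimplexAbove (Fin 3) ε
  have hsteps :
      ∀ᵐ ω ∂μ, ∀ n, M (n + 1) ω ∈ ⋃ i, rowReplacements (stdSimplex ℝ (Fin 3)) i :=
    ae_all_iff.2 fun n => ae_mem_iUnion_rowReplacements (hMmeas _) (hMlaw _)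
      (isClosed_stdSimplex ℝ (Fin 3)) hsimplex
  have hgood : ∀ᵐ ω ∂μ, ∃ᶠ n in atTop, M (n + 1) ω ∈ rowReplacements T 1 ∧
      M (n + 2) ω ∈ rowReplacements T 2 :=
    ae_frequently_mem_and_succ_mem (fun n => hMmeas _) (hMindep.precomp Nat.succ_injective)
      (isClosed_rowReplacements hT 1).measurableSet (isClosed_rowReplacements hT 2).measurableSet
      (mul_ne_zero hνε (by simp))
      (fun n => le_measure_preimage_rowReplacements (hMmeas _) (hMlaw _) hT 1)
      (fun n => le_measure_preimage_rowReplacements (hMmeas _) (hMlaw _) hT 2)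
  have hlim : ∀ᵐ ω ∂μ, ∃ L : Matrix (Fin 3) (Fin 3) ℝ,
      Tendsto (fun n => S n ω) atTop (𝓝 L) ∧ ∀ i j, L i = L j := by
    filter_upwards [hsteps, hgood] with ω hω hω'
    exact exists_tendsto_rows_eq_of_frequently_mem_rowReplacements (N := fun n => M n ω)
      (fun n => hSrec n ω) hω hε hω'
  refine ⟨fun ω => Classical.epsilon fun L => Tendsto (fun n => S n ω) atTop (𝓝 L) ∧
    ∀ i j, L i = L j, ?_⟩
  filter_upwards [hlim] with ω hω
  obtain ⟨hconv, heq⟩ := Classical.epsilon_spec hω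
  exact ⟨hconv, heq 0 1, heq 1 2⟩

/-- Let `(Mₙ)` be i.i.d. random stochastic matrices, each the identity with a
uniformly chosen row replaced by an independent splitting ratio drawn from `ν`.
Then the product `Sₙ = Mₙ ⋯ M₁` converges almost surely to a random matrix all
three of whose rows are identical. -/
theorem matrix_product_converges_rows_equal
    {Ω : Type*} [MeasurableSpace Ω] (μ : Measure Ω) [IsProbabilityMeasure μ]
    (ν : Measure (Fin 3 → ℝ)) [IsProbabilityMeasure ν]
    (hνexch : ∀ σ : Equiv.Perm (Fin 3),
      Measure.map (fun p => p ∘ σ) ν = ν)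
    (hνpos : ∀ᵐ p ∂ν, ∀ i, 0 < p i)
    (hνsum : ∀ᵐ p ∂ν, p 0 + p 1 + p 2 = 1)
    (M : ℕ → Ω → Matrix (Fin 3) (Fin 3) ℝ)
    (hMmeas : ∀ n, Measurable (M n))
    (hMindep : iIndepFun M μ)
    (hMlaw : ∀ n, Measure.map (M n) μ = randomMatrixLaw ν)
    (S : ℕ → Ω → Matrix (Fin 3) (Fin 3) ℝ)
    (hS0 : ∀ ω, S 0 ω = 1)
    (hSrec : ∀ n ω, S (n + 1) ω = M (n + 1) ω * S n ω) :
    ∃ Slim : Ω → Matrix (Fin 3) (Fin 3) ℝ,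
      ∀ᵐ ω ∂μ, Tendsto (fun n => S n ω) atTop (nhds (Slim ω)) ∧
        Slim ω 0 = Slim ω 1 ∧ Slim ω 1 = Slim ω 2 :=
  matrix_product_converges_rows_equal_general μ ν hνpos hνsum M hMmeas hMindep hMlaw S hSrec
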